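/- arXiv:2503.05437 — 2 statements merged into one kernel-verified Lean document; each statement's English description precedes it below -/
import Mathlib

section
/- The vector field with polar components U_r = -cos θ + 2θ sin θ, U_θ = -sin θ + 2θ cos θ (independent of r) with pressure p = -4 r^{-1} cos θ solves -Δu + ∇p = 0 and div u = 0 on ℝ² minus the origin (case λ = 0). -/
open Real

/-- Polar radius. -/
noncomputable def polarR (x y : ℝ) : ℝ := Real.sqrt (x ^ 2 + y ^ 2)

/-- Polar angle, via the complex argument. -/
noncomputable def polarTheta (x y : ℝ) : ℝ := Complex.arg (x + y * Complex.I)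

/-- Partial derivative in the first Cartesian variable. -/
noncomputable def dX (f : ℝ → ℝ → ℝ) (x y : ℝ) : ℝ := deriv (fun t => f t y) x

/-- Partial derivative in the second Cartesian variable. -/
noncomputable def dY (f : ℝ → ℝ → ℝ) (x y : ℝ) : ℝ := deriv (fun t => f x t) y

/-- The two-dimensional Laplacian, componentwise in Cartesian coordinates. -/
noncomputable def lap2 (f : ℝ → ℝ → ℝ) (x y : ℝ) : ℝ :=
  deriv (fun s => deriv (fun t => f t y) s) x + deriv (fun s => deriv (fun t => f x t) s) y

/-- First Cartesian velocity component: `u₁ = U_r cos θ - U_θ sin θ = -cos 2θ`. -/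
noncomputable def u1 (x y : ℝ) : ℝ :=
  (-Real.cos (polarTheta x y) + 2 * polarTheta x y * Real.sin (polarTheta x y)) *
      Real.cos (polarTheta x y)
    - (-Real.sin (polarTheta x y) + 2 * polarTheta x y * Real.cos (polarTheta x y)) *
      Real.sin (polarTheta x y)

/-- Second Cartesian velocity component: `u₂ = U_r sin θ + U_θ cos θ = 2θ + sin 2θ`. -/
noncomputable def u2 (x y : ℝ) : ℝ :=
  (-Real.cos (polarTheta x y) + 2 * polarTheta x y * Real.sin (polarTheta x y)) *
      Real.sin (polarTheta x y)
    + (-Real.sin (polarTheta x y) + 2 * polarTheta x y * Real.cos (polarTheta x y)) *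
      Real.cos (polarTheta x y)

/-- The pressure `p = -4 r⁻¹ cos θ`. -/
noncomputable def pr (x y : ℝ) : ℝ := -4 * (polarR x y)⁻¹ * Real.cos (polarTheta x y)

/-!
Off the origin `cos θ = x / r` and `sin θ = y / r`, so `u₁ = (y² - x²) / r²`,
`u₂ = 2θ - 2xy / r²` and `p = -4x / r²`. Since `θ = Im (log (x + iy))`, its partial derivatives
are `-y / r²` and `x / r²`, and everything else is differentiation of rational functions.
-/

open Filter Topology

section PolarAngle

open Complex

lemma hasDerivAt_arg_add_mul {z w : ℂ} {t : ℝ} (h : z + t * w ∈ slitPlane) :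
    HasDerivAt (fun s : ℝ => arg (z + s * w)) (w / (z + t * w)).im t := by
  have hline : HasDerivAt (fun s : ℝ => z + s * w) w t := by
    simpa using ((hasDerivAt_id t).ofReal_comp.mul_const w).const_add z
  simpa [Function.comp_def, log_im] using imCLM.hasFDerivAt.comp_hasDerivAt t (hline.clog_real h)

variable {x y : ℝ}

lemma ofReal_add_mul_I_ne_zero (h : (x, y) ≠ (0, 0)) : (x : ℂ) + y * I ≠ 0 := by
  simpa [Complex.ext_iff] using h

lemma sq_add_sq_ne_zero (h : (x, y) ≠ (0, 0)) : x ^ 2 + y ^ 2 ≠ 0 := by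
  simpa [normSq_add_mul_I] using (normSq_pos.2 (ofReal_add_mul_I_ne_zero h)).ne'

lemma cos_polarTheta (h : (x, y) ≠ (0, 0)) :
    Real.cos (polarTheta x y) = x / √(x ^ 2 + y ^ 2) := by
  rw [polarTheta, cos_arg (ofReal_add_mul_I_ne_zero h), norm_add_mul_I]
  simp

lemma sin_polarTheta : Real.sin (polarTheta x y) = y / √(x ^ 2 + y ^ 2) := by
  rw [polarTheta, sin_arg, norm_add_mul_I]
  simp

lemma polarTheta_of_neg (hx : x < 0) : polarTheta x 0 = π := by
  simp [polarTheta, arg_ofReal_of_neg hx]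

lemma hasDerivAt_polarTheta_left (h : (x, y) ≠ (0, 0)) :
    HasDerivAt (polarTheta · y) (-y / (x ^ 2 + y ^ 2)) x := by
  by_cases hslit : (x : ℂ) + y * I ∈ slitPlane
  · convert hasDerivAt_arg_add_mul (z := y * I) (w := 1) (t := x) (by simpa [add_comm] using hslit)
      using 1
    · ext s; simp [polarTheta, add_comm]
    · simp [normSq]; ring
  · obtain ⟨hx, rfl⟩ : x ≤ 0 ∧ y = 0 := by simpa [mem_slitPlane_iff] using hslit
    have hx : x < 0 := hx.lt_of_ne (by rintro rfl; exact h rfl)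
    refine (hasDerivAt_const x π).congr_of_eventuallyEq ?_ |>.congr_deriv (by simp)
    filter_upwards [eventually_lt_nhds hx] with s hs using polarTheta_of_neg hs

lemma hasDerivAt_polarTheta_right (h : 0 < x ∨ y ≠ 0) :
    HasDerivAt (polarTheta x) (x / (x ^ 2 + y ^ 2)) y := by
  refine (hasDerivAt_arg_add_mul (z := x) (w := I) (t := y)
    (by simpa [mem_slitPlane_iff] using h)).congr_deriv ?_
  simp [Complex.div_im, normSq]; ring

lemma not_continuousAt_polarTheta_right (hx : x < 0) : ¬ ContinuousAt (polarTheta x) 0 := by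
  intro hcont
  have hline : Tendsto (fun t : ℝ => (x : ℂ) + t * I) (𝓝[<] 0) (𝓝[{z : ℂ | z.im < 0}] x) := by
    have hc : Continuous (fun t : ℝ => (x : ℂ) + t * I) := by fun_prop
    simpa using hc.continuousWithinAt.tendsto_nhdsWithin (x := 0) (s := Set.Iio 0)
      (t := {z : ℂ | z.im < 0}) (fun t (ht : t < 0) => by simpa using ht)
  have hbelow :=
    (tendsto_arg_nhdsWithin_im_neg_of_re_neg_of_im_zero (z := x) (by simpa) (by simp)).comp hline
  have hat := polarTheta_of_neg hx ▸ hcont.tendsto.mono_left (nhdsWithin_le_nhds (s := Set.Iio 0))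
  have := tendsto_nhds_unique hbelow hat
  linarith [Real.pi_pos]

end PolarAngle

section Velocity

variable {x y : ℝ}

lemma eventually_mk_left_ne_zero (h : (x, y) ≠ (0, 0)) : ∀ᶠ s in 𝓝 x, (s, y) ≠ (0, 0) :=
  (continuous_id.prodMk continuous_const).continuousAt.eventually_ne h

lemma eventually_mk_right_ne_zero (h : (x, y) ≠ (0, 0)) : ∀ᶠ s in 𝓝 y, (x, s) ≠ (0, 0) :=
  (continuous_const.prodMk continuous_id).continuousAt.eventually_ne h

lemma u1_eq (h : (x, y) ≠ (0, 0)) : u1 x y = (y ^ 2 - x ^ 2) / (x ^ 2 + y ^ 2) := by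
  have hr : 0 ≤ x ^ 2 + y ^ 2 := by positivity
  calc u1 x y = Real.sin (polarTheta x y) ^ 2 - Real.cos (polarTheta x y) ^ 2 := by
        unfold u1; ring
    _ = _ := by rw [cos_polarTheta h, sin_polarTheta, div_pow, div_pow, Real.sq_sqrt hr]; ring

lemma u2_eq (h : (x, y) ≠ (0, 0)) :
    u2 x y = 2 * polarTheta x y - 2 * x * y / (x ^ 2 + y ^ 2) := by
  have hr : 0 ≤ x ^ 2 + y ^ 2 := by positivity
  calc u2 x y = 2 * polarTheta x y *
          (Real.sin (polarTheta x y) ^ 2 + Real.cos (polarTheta x y) ^ 2)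
        - 2 * (Real.cos (polarTheta x y) * Real.sin (polarTheta x y)) := by
        unfold u2; ring
    _ = _ := by
      rw [Real.sin_sq_add_cos_sq, cos_polarTheta h, sin_polarTheta, div_mul_div_comm,
        Real.mul_self_sqrt hr]
      ring

lemma pr_eq (h : (x, y) ≠ (0, 0)) : pr x y = -4 * x / (x ^ 2 + y ^ 2) := by
  have hr : 0 ≤ x ^ 2 + y ^ 2 := by positivity
  rw [pr, polarR, cos_polarTheta h, mul_assoc, inv_mul_eq_div, div_div, Real.mul_self_sqrt hr]
  ring

lemma hasDerivAt_u1_left (h : (x, y) ≠ (0, 0)) :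
    HasDerivAt (u1 · y) (-4 * x * y ^ 2 / (x ^ 2 + y ^ 2) ^ 2) x := by
  refine HasDerivAt.congr_of_eventuallyEq ?_
    ((eventually_mk_left_ne_zero h).mono fun s hs => u1_eq hs)
  exact (((hasDerivAt_pow 2 x).const_sub (y ^ 2)).div ((hasDerivAt_pow 2 x).add_const (y ^ 2))
    (sq_add_sq_ne_zero h)).congr_deriv (by field_simp; ring)

lemma hasDerivAt_u1_right (h : (x, y) ≠ (0, 0)) :
    HasDerivAt (u1 x) (4 * x ^ 2 * y / (x ^ 2 + y ^ 2) ^ 2) y := by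
  refine HasDerivAt.congr_of_eventuallyEq ?_
    ((eventually_mk_right_ne_zero h).mono fun s hs => u1_eq hs)
  exact (((hasDerivAt_pow 2 y).sub_const (x ^ 2)).div ((hasDerivAt_pow 2 y).const_add (x ^ 2))
    (sq_add_sq_ne_zero h)).congr_deriv (by field_simp; ring)

lemma hasDerivAt_u2_left (h : (x, y) ≠ (0, 0)) :
    HasDerivAt (u2 · y) (-4 * y ^ 3 / (x ^ 2 + y ^ 2) ^ 2) x := by
  refine HasDerivAt.congr_of_eventuallyEq ?_
    ((eventually_mk_left_ne_zero h).mono fun s hs => u2_eq hs)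
  exact (((hasDerivAt_polarTheta_left h).const_mul 2).sub
    ((((hasDerivAt_id' x).const_mul 2).mul_const y).div ((hasDerivAt_pow 2 x).add_const (y ^ 2))
      (sq_add_sq_ne_zero h))).congr_deriv (by field_simp; ring)

lemma hasDerivAt_u2_right (h : 0 < x ∨ y ≠ 0) :
    HasDerivAt (u2 x) (4 * x * y ^ 2 / (x ^ 2 + y ^ 2) ^ 2) y := by
  have h0 : (x, y) ≠ (0, 0) := by rintro ⟨⟩; simp at h
  refine HasDerivAt.congr_of_eventuallyEq ?_
    ((eventually_mk_right_ne_zero h0).mono fun s hs => u2_eq hs)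
  exact (((hasDerivAt_polarTheta_right h).const_mul 2).sub
    (((hasDerivAt_id' y).const_mul (2 * x)).div ((hasDerivAt_pow 2 y).const_add (x ^ 2))
      (sq_add_sq_ne_zero h0))).congr_deriv (by field_simp; ring)

lemma not_differentiableAt_u2_right (hx : x < 0) : ¬ DifferentiableAt ℝ (u2 x) 0 := by
  intro hd
  have hθ : polarTheta x = fun t => (u2 x t + 2 * x * t / (x ^ 2 + t ^ 2)) / 2 := by
    funext t
    rw [u2_eq (by simp [hx.ne])]
    ring
  have hr : x ^ 2 + 0 ^ 2 ≠ 0 := by simp [hx.ne]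
  exact not_continuousAt_polarTheta_right hx <| hθ ▸
    (hd.continuousAt.add (ContinuousAt.div (by fun_prop) (by fun_prop) hr)).div_const 2

/-- Across the negative `x`-axis `θ` jumps from `-π` to `π`, so there `deriv` returns its junk
value `0`, which happens to agree with the formula at `y = 0`. -/
lemma deriv_u2_right (h : (x, y) ≠ (0, 0)) :
    deriv (u2 x) y = 4 * x * y ^ 2 / (x ^ 2 + y ^ 2) ^ 2 := by
  by_cases hslit : 0 < x ∨ y ≠ 0
  · exact (hasDerivAt_u2_right hslit).deriv
  · obtain ⟨hx, rfl⟩ : x ≤ 0 ∧ y = 0 := by simpa using hslit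
    have hx : x < 0 := hx.lt_of_ne (by rintro rfl; exact h rfl)
    simp [deriv_zero_of_not_differentiableAt (not_differentiableAt_u2_right hx)]

lemma hasDerivAt_pr_left (h : (x, y) ≠ (0, 0)) :
    HasDerivAt (pr · y) (4 * (x ^ 2 - y ^ 2) / (x ^ 2 + y ^ 2) ^ 2) x := by
  refine HasDerivAt.congr_of_eventuallyEq ?_
    ((eventually_mk_left_ne_zero h).mono fun s hs => pr_eq hs)
  exact (((hasDerivAt_id' x).const_mul (-4)).div ((hasDerivAt_pow 2 x).add_const (y ^ 2))
    (sq_add_sq_ne_zero h)).congr_deriv (by field_simp; ring)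

lemma hasDerivAt_pr_right (h : (x, y) ≠ (0, 0)) :
    HasDerivAt (pr x) (8 * x * y / (x ^ 2 + y ^ 2) ^ 2) y := by
  refine HasDerivAt.congr_of_eventuallyEq ?_
    ((eventually_mk_right_ne_zero h).mono fun s hs => pr_eq hs)
  exact ((hasDerivAt_const y (-4 * x)).div ((hasDerivAt_pow 2 y).const_add (x ^ 2))
    (sq_add_sq_ne_zero h)).congr_deriv (by field_simp; ring)

lemma lap2_u1 (h : (x, y) ≠ (0, 0)) :
    lap2 u1 x y = 4 * (x ^ 2 - y ^ 2) / (x ^ 2 + y ^ 2) ^ 2 := by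
  have hr := sq_add_sq_ne_zero h
  have hxx : HasDerivAt (fun s => deriv (u1 · y) s)
      (-4 * y ^ 2 * (y ^ 2 - 3 * x ^ 2) / (x ^ 2 + y ^ 2) ^ 3) x :=
    ((((hasDerivAt_id' x).const_mul (-4)).mul_const (y ^ 2)).div
      (((hasDerivAt_pow 2 x).add_const (y ^ 2)).fun_pow 2) (pow_ne_zero 2 hr)).congr_of_eventuallyEq
      ((eventually_mk_left_ne_zero h).mono fun s hs => (hasDerivAt_u1_left hs).deriv)
      |>.congr_deriv (by field_simp; ring)
  have hyy : HasDerivAt (fun s => deriv (u1 x) s)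
      (4 * x ^ 2 * (x ^ 2 - 3 * y ^ 2) / (x ^ 2 + y ^ 2) ^ 3) y :=
    (((hasDerivAt_id' y).const_mul (4 * x ^ 2)).div
      (((hasDerivAt_pow 2 y).const_add (x ^ 2)).fun_pow 2) (pow_ne_zero 2 hr)).congr_of_eventuallyEq
      ((eventually_mk_right_ne_zero h).mono fun s hs => (hasDerivAt_u1_right hs).deriv)
      |>.congr_deriv (by field_simp; ring)
  rw [lap2, hxx.deriv, hyy.deriv]
  field_simp
  ring

lemma lap2_u2 (h : (x, y) ≠ (0, 0)) : lap2 u2 x y = 8 * x * y / (x ^ 2 + y ^ 2) ^ 2 := by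
  have hr := sq_add_sq_ne_zero h
  have hxx : HasDerivAt (fun s => deriv (u2 · y) s) (16 * x * y ^ 3 / (x ^ 2 + y ^ 2) ^ 3) x :=
    ((hasDerivAt_const x (-4 * y ^ 3)).div
      (((hasDerivAt_pow 2 x).add_const (y ^ 2)).fun_pow 2) (pow_ne_zero 2 hr)).congr_of_eventuallyEq
      ((eventually_mk_left_ne_zero h).mono fun s hs => (hasDerivAt_u2_left hs).deriv)
      |>.congr_deriv (by field_simp; ring)
  have hyy : HasDerivAt (fun s => deriv (u2 x) s)
      (8 * x * y * (x ^ 2 - y ^ 2) / (x ^ 2 + y ^ 2) ^ 3) y :=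
    (((hasDerivAt_pow 2 y).const_mul (4 * x)).div
      (((hasDerivAt_pow 2 y).const_add (x ^ 2)).fun_pow 2) (pow_ne_zero 2 hr)).congr_of_eventuallyEq
      ((eventually_mk_right_ne_zero h).mono fun s hs => deriv_u2_right hs)
      |>.congr_deriv (by field_simp; ring)
  rw [lap2, hxx.deriv, hyy.deriv]
  field_simp
  ring

end Velocity

theorem stmt_13 :
    ∀ x y : ℝ, (x, y) ≠ (0, 0) →
      (-(lap2 u1 x y) + dX pr x y = 0 ∧ -(lap2 u2 x y) + dY pr x y = 0) ∧
      dX u1 x y + dY u2 x y = 0 := by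
  intro x y h
  refine ⟨⟨?_, ?_⟩, ?_⟩
  · rw [lap2_u1 h, dX, (hasDerivAt_pr_left h).deriv, neg_add_cancel]
  · rw [lap2_u2 h, dY, (hasDerivAt_pr_right h).deriv, neg_add_cancel]
  · rw [dX, dY, (hasDerivAt_u1_left h).deriv, deriv_u2_right h]
    ring
end

section
/- Explicitly, the 2×2 matrix M(λ,ω) with rows (−(1−λ)cos((1+λ)ω) + (1−λ)cos((1−λ)ω), −(1+λ)sin((1+λ)ω) + (1−λ)sin((1−λ)ω)) and ((1−λ)sin((1+λ)ω) − (1+λ)sin((1−λ)ω), −(1+λ)cos((1+λ)ω) + (1+λ)cos((1−λ)ω)) has determinant 4(sin²(λω) − λ² sin² ω). -/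
open Real Matrix

theorem stmt_18 (lam ω : ℝ) :
    Matrix.det
      !![-(1 - lam) * Real.cos ((1 + lam) * ω) + (1 - lam) * Real.cos ((1 - lam) * ω),
          -(1 + lam) * Real.sin ((1 + lam) * ω) + (1 - lam) * Real.sin ((1 - lam) * ω);
         (1 - lam) * Real.sin ((1 + lam) * ω) - (1 + lam) * Real.sin ((1 - lam) * ω),
          -(1 + lam) * Real.cos ((1 + lam) * ω) + (1 + lam) * Real.cos ((1 - lam) * ω)]
      = 4 * (Real.sin (lam * ω) ^ 2 - lam ^ 2 * Real.sin ω ^ 2) := by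
  have h1 : (1 + lam) * ω = ω + lam * ω := by ring
  have h2 : (1 - lam) * ω = ω - lam * ω := by ring
  rw [Matrix.det_fin_two_of, h1, h2, Real.cos_add, Real.cos_sub, Real.sin_add, Real.sin_sub]
  linear_combination (4 * Real.sin (lam * ω) ^ 2) * Real.sin_sq_add_cos_sq ω -
    (4 * lam ^ 2 * Real.sin ω ^ 2) * Real.sin_sq_add_cos_sq (lam * ω)
end
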